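/- Let k ≥ 2 and let T be a tree with diam(T) ≥ k + 2. If u is a diametral leaf of T that is a k-twin, then mdi_k(T ∖ u) ≤ mdi_k(T) − 2, where T ∖ u is the tree obtained from T by deleting u. -/

import Mathlib

/-!
Deleting a leaf does not change distances among the remaining vertices, and a distance-`k`
independent set is maximal exactly when every vertex lies within distance `k` of it. So a
`k`-MDIS of `T ∖ u` stays a `k`-MDIS of `T`: the twin `v` of `u` is within distance `k` of
some member, which then lies in `N_k[v] = N_k[u]`. These sets avoid `u`, whereas a vertex `z`
at distance `≥ k + 2` from `u` and its neighbour `z'` towards `u` give two different `k`-MDISs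
containing `u`, extending `{u, z}` and `{u, z'}`.
-/

/-- `J` is a distance-`k` independent set in `G`: any two distinct vertices of `J`
are at graph distance at least `k + 1`. -/
def DkIndep {V : Type*} (G : SimpleGraph V) (k : ℕ) (J : Set V) : Prop :=
  ∀ ⦃u⦄, u ∈ J → ∀ ⦃v⦄, v ∈ J → u ≠ v → k + 1 ≤ G.dist u v

/-- `J` is a maximal distance-`k` independent set (`k`-MDIS) of `G`. -/
def MaxDkIndep {V : Type*} (G : SimpleGraph V) (k : ℕ) (J : Set V) : Prop :=
  DkIndep G k J ∧ ∀ J', DkIndep G k J' → J ⊆ J' → J' = J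

/-- `mdi G k` is the number of maximal distance-`k` independent sets of `G`. -/
noncomputable def mdi {V : Type*} (G : SimpleGraph V) (k : ℕ) : ℕ :=
  {J : Set V | MaxDkIndep G k J}.ncard

/-- `f_k(n)` from the paper. -/
def fk (k n : ℕ) : ℕ :=
  if n ≤ k + 1 then n else n - (n - k % 2) / (k / 2 + 1) + 1

/-- closed ball `N_k[x]`. -/
def ball {V : Type*} (G : SimpleGraph V) (k : ℕ) (x : V) : Set V :=
  {v | G.dist x v ≤ k}

/-- a leaf is a vertex of degree 1. -/
def IsLeaf {V : Type*} (G : SimpleGraph V) (v : V) : Prop :=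
  (G.neighborSet v).ncard = 1

/-- eccentricity of a vertex. -/
noncomputable def ecc {V : Type*} [Fintype V] (G : SimpleGraph V) (v : V) : ℕ :=
  Finset.univ.sup (G.dist v)

/-- diameter of a finite graph. -/
noncomputable def gdiam {V : Type*} [Fintype V] (G : SimpleGraph V) : ℕ :=
  Finset.univ.sup (ecc G)

/-- a central vertex is one of minimum eccentricity. -/
def IsCentral {V : Type*} [Fintype V] (G : SimpleGraph V) (v : V) : Prop :=
  ∀ u, ecc G v ≤ ecc G u

/-- a `k`-twin: some other vertex has the same closed `k`-ball. -/
def KTwin {V : Type*} (G : SimpleGraph V) (k : ℕ) (u : V) : Prop :=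
  ∃ v, v ≠ u ∧ ball G k u = ball G k v

/-- a diametral leaf: a leaf whose eccentricity equals the diameter. -/
def IsDiametralLeaf {V : Type*} [Fintype V] (G : SimpleGraph V) (u : V) : Prop :=
  IsLeaf G u ∧ ecc G u = gdiam G

/-- a `k`-special pair. -/
def KSpecial {V : Type*} [Fintype V] (G : SimpleGraph V) (k : ℕ) (x y : V) : Prop :=
  IsDiametralLeaf G x ∧ IsDiametralLeaf G y ∧ KTwin G k x ∧ KTwin G k y ∧
    ball G k x ≠ ball G k y

/-- `mdi*_k(G, ℓ)`. -/
noncomputable def mdiStar {V : Type*} (G : SimpleGraph V) (k : ℕ) (ℓ : V) : ℕ :=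
  {J : Set V | MaxDkIndep G k J ∧ ℓ ∈ J ∧ ∃ w ∉ J, ball G k w ∩ J = {ℓ}}.ncard

/-- The spider tree `S_{p,m}`: a center (`none`) together with `p` legs of `m` vertices. -/
def spider (p m : ℕ) : SimpleGraph (Option (Fin p × Fin m)) :=
  SimpleGraph.fromRel fun a b =>
    match a, b with
    | none, some (_, j) => (j : ℕ) = 0
    | some (i, j), some (i', j') => i = i' ∧ (j : ℕ) + 1 = (j' : ℕ)
    | _, _ => False

/-- `S'_{p,m}`: the spider `S_{p,m}` with one leaf at distance `m` from the center removed. -/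
def spider' (p m : ℕ) (hp : 0 < p) (hm : 0 < m) :=
  (spider p m).induce
    {v | v ≠ some (⟨0, hp⟩, ⟨m - 1, Nat.sub_lt hm Nat.one_pos⟩)}

/-- The double spider `B_{p₁,p₂,s}`: two adjacent centers (`Sum.inl false`, `Sum.inl true`),
with `p₁` legs of `s` vertices on the first and `p₂` legs of `s` vertices on the second. -/
def btree (p₁ p₂ s : ℕ) : SimpleGraph (Bool ⊕ ((Fin p₁ ⊕ Fin p₂) × Fin s)) :=
  SimpleGraph.fromRel fun a b =>
    match a, b with
    | Sum.inl x, Sum.inl y => x ≠ y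
    | Sum.inl false, Sum.inr (Sum.inl _, j) => (j : ℕ) = 0
    | Sum.inl true, Sum.inr (Sum.inr _, j) => (j : ℕ) = 0
    | Sum.inr (c, j), Sum.inr (c', j') => c = c' ∧ (j : ℕ) + 1 = (j' : ℕ)
    | _, _ => False

/-- `G` contains a subgraph isomorphic to `H`. -/
def ContainsSub {V W : Type*} (G : SimpleGraph V) (H : SimpleGraph W) : Prop :=
  ∃ f : W → V, Function.Injective f ∧ ∀ a b, H.Adj a b → G.Adj (f a) (f b)

/-- A pendant path on `s` vertices `P 0, …, P (s-1)` attached to `w`: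
`P 0` is a leaf, consecutive vertices are adjacent, interior vertices have degree 2,
and `P (s-1)` is adjacent to `w`. -/
def IsPendantPath {V : Type*} (T : SimpleGraph V) (s : ℕ) (P : ℕ → V) (w : V) : Prop :=
  Set.InjOn P (Set.Iio s) ∧ (∀ i < s, P i ≠ w) ∧ IsLeaf T (P 0) ∧
    (∀ i, i + 1 < s → T.Adj (P i) (P (i + 1))) ∧
    (∀ i, 0 < i → i < s → (T.neighborSet (P i)).ncard = 2) ∧
    T.Adj (P (s - 1)) w

/-- Isomorphism of simple graphs on `Fin n` as a setoid. -/
def graphSetoid (n : ℕ) : Setoid (SimpleGraph (Fin n)) where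
  r G H := Nonempty (G ≃g H)
  iseqv := ⟨fun _ => ⟨SimpleGraph.Iso.refl⟩, fun ⟨e⟩ => ⟨e.symm⟩, fun ⟨e⟩ ⟨f⟩ => ⟨e.trans f⟩⟩

/-- The number of isomorphism classes of graphs in a set of graphs on `Fin n`. -/
noncomputable def numIsoClasses {n : ℕ} (S : Set (SimpleGraph (Fin n))) : ℕ :=
  ((fun G => Quotient.mk (graphSetoid n) G) '' S).ncard

namespace SimpleGraph

variable {V : Type*} {G : SimpleGraph V}

theorem dist_induce_of_subsingleton_neighborSet {s : Set V}
    (hs : ∀ v ∉ s, (G.neighborSet v).Subsingleton) (x y : s) :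
    (G.induce s).dist x y = G.dist x y := by
  by_cases hxy : G.Reachable x y
  · obtain ⟨p, hp, hlen⟩ := hxy.exists_path_of_dist
    have hps : ∀ w ∈ p.support, w ∈ s := fun w hw => by
      by_contra hws
      exact hp.isTrail.not_mem_support_of_subsingleton_neighborSet
        (ne_of_mem_of_not_mem x.2 hws).symm (ne_of_mem_of_not_mem y.2 hws).symm (hs w hws) hw
    let q : (G.induce s).Walk x y := p.induce s hps
    have hq : q.length = p.length := by
      have := congrArg Walk.length (p.map_induce hps)
      rwa [Walk.length_map] at this
    obtain ⟨r, hr⟩ := Reachable.exists_walk_length_eq_dist (G := G.induce s) ⟨q⟩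
    refine le_antisymm ((dist_le q).trans (hq.trans hlen).le) ?_
    have := G.dist_le (r.map (Embedding.induce s).toHom)
    rwa [Walk.length_map, hr] at this
  · have : ¬(G.induce s).Reachable x y := fun h => hxy (h.map (Embedding.induce s).toHom)
    rw [dist_eq_zero_of_not_reachable hxy, dist_eq_zero_of_not_reachable this]

end SimpleGraph

variable {V : Type*} {G : SimpleGraph V} {k : ℕ}

theorem IsLeaf.subsingleton_neighborSet {v : V} (h : IsLeaf G v) :
    (G.neighborSet v).Subsingleton := by
  obtain ⟨w, hw⟩ := Set.ncard_eq_one.mp h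
  exact hw ▸ Set.subsingleton_singleton

theorem exists_dist_eq_ecc [Fintype V] [Nonempty V] (G : SimpleGraph V) (x : V) :
    ∃ z, G.dist x z = ecc G x := by
  obtain ⟨z, -, hz⟩ := Finset.exists_mem_eq_sup Finset.univ Finset.univ_nonempty (G.dist x)
  exact ⟨z, hz.symm⟩

theorem DkIndep.insert {J : Set V} (hJ : DkIndep G k J) {w : V}
    (hw : ∀ j ∈ J, j ≠ w → k + 1 ≤ G.dist w j) : DkIndep G k (insert w J) := by
  rintro a (rfl | ha) b (rfl | hb) hab
  · exact absurd rfl hab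
  · exact hw b hb hab.symm
  · exact G.dist_comm ▸ hw a ha hab
  · exact hJ ha hb hab

theorem dkIndep_pair {x y : V} (h : k + 1 ≤ G.dist x y) : DkIndep G k {x, y} := by
  refine DkIndep.insert (fun a ha b hb hab => absurd (ha.trans hb.symm) hab) ?_
  rintro _ rfl -
  exact h

theorem maxDkIndep_iff {J : Set V} :
    MaxDkIndep G k J ↔ DkIndep G k J ∧ ∀ w, ∃ j ∈ J, G.dist w j ≤ k := by
  constructor
  · rintro ⟨hJ, hmax⟩
    refine ⟨hJ, fun w => ?_⟩
    by_contra! hfar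
    have hwJ : w ∈ J := hmax _ (hJ.insert fun j hj _ => hfar j hj) (Set.subset_insert w J) ▸
      Set.mem_insert w J
    simpa using hfar w hwJ
  · rintro ⟨hJ, hdom⟩
    refine ⟨hJ, fun J' hJ' hsub => Set.Subset.antisymm (fun w hw => ?_) hsub⟩
    obtain ⟨j, hj, hwj⟩ := hdom w
    by_contra hwJ
    have := hJ' hw (hsub hj) (ne_of_mem_of_not_mem hj hwJ).symm
    omega

theorem DkIndep.exists_maxDkIndep_superset [Finite V] {S : Set V} (hS : DkIndep G k S) :
    ∃ J, S ⊆ J ∧ MaxDkIndep G k J := by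
  obtain ⟨J, ⟨hJ, hSJ⟩, hmax⟩ :=
    Set.Finite.exists_maximalFor id {J : Set V | DkIndep G k J ∧ S ⊆ J} (Set.toFinite _)
      ⟨S, hS, subset_rfl⟩
  exact ⟨J, hSJ, hJ, fun J' hJ' hJJ' =>
    Set.Subset.antisymm (hmax ⟨hJ', hSJ.trans hJJ'⟩ hJJ') hJJ'⟩

theorem two_le_ncard_maxDkIndep_mem [Finite V] (hk : 0 < k) {x z : V}
    (hxz : k + 2 ≤ G.dist x z) : 2 ≤ {J | MaxDkIndep G k J ∧ x ∈ J}.ncard := by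
  obtain ⟨p, -⟩ := G.exists_walk_of_dist_ne_zero (by omega : G.dist x z ≠ 0)
  have hadj : G.Adj p.penultimate z :=
    p.adj_penultimate (SimpleGraph.Walk.not_nil_of_ne (by rintro rfl; simp at hxz))
  have hxz' : k + 1 ≤ G.dist x p.penultimate := by
    have := hadj.reachable.dist_triangle_right x
    rw [SimpleGraph.dist_eq_one_iff_adj.mpr hadj] at this
    omega
  obtain ⟨J₁, hxzJ₁, hJ₁⟩ :=
    (dkIndep_pair (G := G) (by omega : k + 1 ≤ G.dist x z)).exists_maxDkIndep_superset
  obtain ⟨J₂, hxzJ₂, hJ₂⟩ := (dkIndep_pair hxz').exists_maxDkIndep_superset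
  have hJ₁₂ : J₁ ≠ J₂ := by
    rintro rfl
    have := hJ₁.1 (hxzJ₂ (by simp)) (hxzJ₁ (by simp)) hadj.ne
    rw [SimpleGraph.dist_eq_one_iff_adj.mpr hadj] at this
    omega
  calc 2 = ({J₁, J₂} : Set (Set V)).ncard := (Set.ncard_pair hJ₁₂).symm
    _ ≤ _ := by
      refine Set.ncard_le_ncard ?_ (Set.toFinite _)
      rintro J (rfl | rfl)
      exacts [⟨hJ₁, hxzJ₁ (by simp)⟩, ⟨hJ₂, hxzJ₂ (by simp)⟩]

theorem MaxDkIndep.image_val_of_ball_subset {u v : V} (hu : (G.neighborSet u).Subsingleton)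
    (hvu : v ≠ u) (hball : ball G k v ⊆ ball G k u) {J : Set ({w | w ≠ u} : Set V)}
    (hJ : MaxDkIndep (G.induce {w | w ≠ u}) k J) : MaxDkIndep G k (Subtype.val '' J) := by
  have hdist := G.dist_induce_of_subsingleton_neighborSet (s := {w | w ≠ u})
    (fun w hw => (not_not.mp hw) ▸ hu)
  rw [maxDkIndep_iff] at hJ ⊢
  refine ⟨?_, fun w => ?_⟩
  · rintro _ ⟨x, hx, rfl⟩ _ ⟨y, hy, rfl⟩ hxy
    rw [← hdist]
    exact hJ.1 hx hy (ne_of_apply_ne _ hxy)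
  · by_cases hw : w = u
    · obtain ⟨j, hj, hvj⟩ := hJ.2 ⟨v, hvu⟩
      rw [hdist] at hvj
      exact ⟨j, ⟨j, hj, rfl⟩, hw ▸ hball hvj⟩
    · obtain ⟨j, hj, hwj⟩ := hJ.2 ⟨w, hw⟩
      rw [hdist] at hwj
      exact ⟨j, ⟨j, hj, rfl⟩, hwj⟩

theorem mdi_induce_le_ncard_not_mem [Finite V] {u v : V} (hu : (G.neighborSet u).Subsingleton)
    (hvu : v ≠ u) (hball : ball G k v ⊆ ball G k u) :
    mdi (G.induce {w | w ≠ u}) k ≤ {J | MaxDkIndep G k J ∧ u ∉ J}.ncard := by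
  rw [mdi, ← Set.ncard_image_of_injective _ (Set.image_injective.mpr Subtype.val_injective)]
  refine Set.ncard_le_ncard ?_ (Set.toFinite _)
  rintro _ ⟨J, hJ, rfl⟩
  exact ⟨hJ.image_val_of_ball_subset hu hvu hball, fun ⟨x, _, hxu⟩ => x.2 hxu⟩

theorem mdi_eq_ncard_mem_add_ncard_not_mem [Finite V] (G : SimpleGraph V) (k : ℕ) (x : V) :
    mdi G k = {J | MaxDkIndep G k J ∧ x ∈ J}.ncard + {J | MaxDkIndep G k J ∧ x ∉ J}.ncard :=
  (Set.ncard_inter_add_ncard_sdiff_eq_ncard {J | MaxDkIndep G k J} {J | x ∈ J}).symm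

theorem stmt_7_general {V : Type} [Fintype V] (k : ℕ) (hk : 2 ≤ k) (T : SimpleGraph V)
    (hdiam : k + 2 ≤ gdiam T) (u : V)
    (hdl : IsDiametralLeaf T u) (htwin : KTwin T k u) :
    mdi (T.induce {v | v ≠ u}) k ≤ mdi T k - 2 := by
  obtain ⟨hleaf, hecc⟩ := hdl
  obtain ⟨v, hvu, hball⟩ := htwin
  have : Nonempty V := ⟨u⟩
  obtain ⟨z, hz⟩ := exists_dist_eq_ecc T u
  have hmem := two_le_ncard_maxDkIndep_mem (by omega) (hz ▸ hecc ▸ hdiam : k + 2 ≤ T.dist u z)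
  have hnotMem := mdi_induce_le_ncard_not_mem hleaf.subsingleton_neighborSet hvu hball.ge
  have := mdi_eq_ncard_mem_add_ncard_not_mem T k u
  omega

/-- If `T` is a tree with `diam(T) ≥ k + 2` (`k ≥ 2`) and `u` is a
diametral leaf of `T` that is a `k`-twin, then `mdi_k(T ∖ u) ≤ mdi_k(T) − 2`. -/
theorem stmt_7 {V : Type} [Fintype V] (k : ℕ) (hk : 2 ≤ k) (T : SimpleGraph V)
    (hT : T.IsTree) (hdiam : k + 2 ≤ gdiam T) (u : V)
    (hdl : IsDiametralLeaf T u) (htwin : KTwin T k u) :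
    mdi (T.induce {v | v ≠ u}) k ≤ mdi T k - 2 :=
  stmt_7_general k hk T hdiam u hdl htwin
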